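/- With G the infinite bidiagonal operator with G[m,m] = m·a and G[m,m+1] = m·b (a, b > 0), the entries of e^{tG} satisfy, for all positive integers m and nonnegative integers k: (e^{tG})[m, m+k] = C(k+m-1, k)·(b/a)^k·e^{m t a}·(e^{t a} - 1)^k. -/

import Mathlib

/-- Entries of the infinite bidiagonal Carleman matrix `G`, indexed by positive
integers: `G[m,m] = m·a`, `G[m,m+1] = m·b`, all other entries zero. -/
noncomputable def carlemanEntry (a b : ℝ) (m m' : ℕ) : ℝ :=
  if m' = m then (m : ℝ) * a else if m' = m + 1 then (m : ℝ) * b else 0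

/-- Entries of the `n`-th power `G^n` of the Carleman matrix. -/
noncomputable def carlemanPow (a b : ℝ) : ℕ → ℕ → ℕ → ℝ
  | 0, m, m' => if m = m' then 1 else 0
  | n + 1, m, m' => ∑' j : ℕ, carlemanPow a b n m j * carlemanEntry a b j m'

lemma carlemanPow_eq_zero (a b : ℝ) (m : ℕ) : ∀ n j, j < m → carlemanPow a b n m j = 0 := by
  intro n
  induction n with
  | zero =>
    intro j hj
    have : m ≠ j := by omega
    simp [carlemanPow, this]
  | succ n ih =>
    intro j hj
    rw [carlemanPow]
    convert tsum_zero with i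
    rcases lt_or_ge i m with h | h
    · rw [ih i h, zero_mul]
    · have h1 : j ≠ i := by omega
      have h2 : j ≠ i + 1 := by omega
      simp [carlemanEntry, h1, h2]

lemma carlemanPow_succ_eq (a b : ℝ) (m m' n : ℕ) (hm' : 0 < m') :
    carlemanPow a b (n+1) m m' =
      carlemanPow a b n m (m'-1) * (((m'-1 : ℕ) : ℝ) * b)
        + carlemanPow a b n m m' * ((m' : ℝ) * a) := by
  have hne : m' - 1 ≠ m' := by omega
  rw [carlemanPow]
  rw [tsum_eq_sum (s := {m' - 1, m'}) (by
    intro j hj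
    simp only [Finset.mem_insert, Finset.mem_singleton] at hj
    push_neg at hj
    have h1 : m' ≠ j := fun h => hj.2 h.symm
    have h2 : m' ≠ j + 1 := by omega
    simp [carlemanEntry, h1, h2])]
  rw [Finset.sum_pair hne]
  have e1 : carlemanEntry a b (m' - 1) m' = ((m'-1 : ℕ) : ℝ) * b := by
    have h1 : m' ≠ m' - 1 := by omega
    have h2 : m' = (m' - 1) + 1 := by omega
    unfold carlemanEntry
    rw [if_neg h1, if_pos h2]
  have e2 : carlemanEntry a b m' m' = (m' : ℝ) * a := by simp [carlemanEntry]
  rw [e1, e2]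

open Finset

noncomputable def Sent (a : ℝ) (m k n : ℕ) : ℝ :=
  ∑ r ∈ Finset.range (k+1), (-1:ℝ)^(k-r) * (Nat.choose k r : ℝ) * (((m:ℝ)+r) * a)^n

lemma Sent_zero (a : ℝ) (m n : ℕ) : Sent a m 0 n = ((m:ℝ) * a)^n := by
  simp [Sent]

lemma Sent_n_zero (a : ℝ) (m k : ℕ) (hk : 0 < k) : Sent a m k 0 = 0 := by
  unfold Sent
  have h1 : ∀ r ∈ range (k+1), (-1:ℝ)^(k-r) * (Nat.choose k r : ℝ) * (((m:ℝ)+r)*a)^0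
      = (-1:ℝ)^k * ((-1:ℝ)^r * (Nat.choose k r : ℝ)) := by
    intro r hr
    have hr' : r ≤ k := by have := Finset.mem_range.mp hr; omega
    have hpar : (-1:ℝ)^(k-r) = (-1:ℝ)^(k+r) := by
      rw [show k+r = (k-r)+2*r by omega, pow_add, pow_mul]
      simp
    rw [pow_zero, mul_one, hpar, pow_add]
    ring
  rw [Finset.sum_congr rfl h1, ← Finset.mul_sum]
  have h2 : ∑ r ∈ range (k+1), (-1:ℝ)^r * (Nat.choose k r : ℝ) = 0 := by
    have h := Int.alternating_sum_range_choose_of_ne (n := k) hk.ne'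
    have := congrArg (Int.cast : ℤ → ℝ) h
    push_cast at this
    convert this using 2
  rw [h2, mul_zero]

lemma Sent_succ (a : ℝ) (m k n : ℕ) :
    Sent a m (k+1) (n+1) = ((m:ℝ)+((k:ℝ)+1))*a * Sent a m (k+1) n
      + ((k:ℝ)+1)*a * Sent a m k n := by
  have step1 : Sent a m (k+1) (n+1)
      = ((m:ℝ)+((k:ℝ)+1))*a * Sent a m (k+1) n
        - a * ∑ r ∈ range (k+2), ((k+1-r : ℕ):ℝ) *
            ((-1:ℝ)^(k+1-r) * (Nat.choose (k+1) r : ℝ) * (((m:ℝ)+r)*a)^n) := by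
    unfold Sent
    rw [Finset.mul_sum, Finset.mul_sum, ← Finset.sum_sub_distrib]
    apply Finset.sum_congr rfl
    intro r hr
    have hr' : r ≤ k + 1 := by have := Finset.mem_range.mp hr; omega
    have hc : ((k+1-r : ℕ):ℝ) = ((k:ℝ)+1) - (r:ℝ) := by
      rw [Nat.cast_sub hr']; push_cast; ring
    rw [hc, pow_succ]
    ring
  have step2 : ∑ r ∈ range (k+2), ((k+1-r : ℕ):ℝ) *
        ((-1:ℝ)^(k+1-r) * (Nat.choose (k+1) r : ℝ) * (((m:ℝ)+r)*a)^n)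
      = -(((k:ℝ)+1) * Sent a m k n) := by
    have h1 : ∀ r ∈ range (k+2), ((k+1-r : ℕ):ℝ) *
          ((-1:ℝ)^(k+1-r) * (Nat.choose (k+1) r : ℝ) * (((m:ℝ)+r)*a)^n)
        = ((k:ℝ)+1) * ((-1:ℝ)^(k+1-r) * (Nat.choose k r : ℝ) * (((m:ℝ)+r)*a)^n) := by
      intro r hr
      have hid := Nat.choose_mul_succ_eq k r
      have hidR : (Nat.choose k r : ℝ) * ((k:ℝ)+1)
          = (Nat.choose (k+1) r : ℝ) * ((k+1-r : ℕ):ℝ) := by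
        exact_mod_cast congrArg (Nat.cast : ℕ → ℝ) hid
      linear_combination (-((-1:ℝ)^(k+1-r) * (((m:ℝ)+r)*a)^n)) * hidR
    rw [Finset.sum_congr rfl h1, ← Finset.mul_sum]
    rw [Finset.sum_range_succ]
    have hz : (Nat.choose k (k+1) : ℝ) = 0 := by
      rw [Nat.choose_eq_zero_of_lt (by omega)]; simp
    rw [hz]
    have h3 : ∀ r ∈ range (k+1),
        (-1:ℝ)^(k+1-r) * (Nat.choose k r : ℝ) * (((m:ℝ)+r)*a)^n
        = -((-1:ℝ)^(k-r) * (Nat.choose k r : ℝ) * (((m:ℝ)+r)*a)^n) := by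
      intro r hr
      have hr' : r ≤ k := by have := Finset.mem_range.mp hr; omega
      rw [show k+1-r = (k-r)+1 by omega, pow_succ]
      ring
    rw [Finset.sum_congr rfl h3, Finset.sum_neg_distrib]
    unfold Sent
    ring
  rw [step1, step2]
  ring

lemma carlemanPow_eq (a b : ℝ) (ha : a ≠ 0) (m : ℕ) (hm : 0 < m) :
    ∀ n k, carlemanPow a b n m (m+k)
      = (Nat.choose (k+m-1) k : ℝ) * (b/a)^k * Sent a m k n := by
  intro n
  induction n with
  | zero =>
    intro k
    cases k with
    | zero => simp [carlemanPow, Sent]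
    | succ K =>
      have h1 : m ≠ m + (K+1) := by omega
      rw [Sent_n_zero a m (K+1) (by omega)]
      simp [carlemanPow, h1]
  | succ n ih =>
    intro k
    rw [carlemanPow_succ_eq a b m (m+k) n (by omega)]
    cases k with
    | zero =>
      rw [carlemanPow_eq_zero a b m n (m + 0 - 1) (by omega)]
      have h0 := ih 0
      simp only [Nat.add_zero] at h0 ⊢
      rw [h0, Sent_zero, Sent_zero]
      simp only [Nat.choose_zero_right, Nat.cast_one, pow_zero]
      rw [pow_succ]
      ring
    | succ K =>
      have e1 : m + (K+1) - 1 = m + K := by omega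
      rw [e1, ih (K+1), ih K, Sent_succ]
      have hid := Nat.add_one_mul_choose_eq (K+m-1) K
      have e2 : (K+m-1) + 1 = K+m := by omega
      rw [e2] at hid
      have e3 : (K+1)+m-1 = K+m := by omega
      rw [e3]
      have hidR : ((K:ℝ)+m) * (Nat.choose (K+m-1) K : ℝ)
          = (Nat.choose (K+m) (K+1) : ℝ) * ((K:ℝ)+1) := by exact_mod_cast hid
      have hba : (b/a)^(K+1) * a = (b/a)^K * b := by
        rw [pow_succ]
        field_simp
      have hcast : ((m + K : ℕ) : ℝ) = (m:ℝ) + K := by push_cast; ring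
      have hcast2 : ((m + (K+1) : ℕ) : ℝ) = (m:ℝ) + K + 1 := by push_cast; ring
      rw [hcast, hcast2]
      linear_combination (Sent a m K n * (b/a)^K * b) * hidR
        - (Sent a m K n * ((Nat.choose (K+m) (K+1) : ℝ)) * ((K:ℝ)+1)) * hba

theorem carleman_exp_entries (a b t : ℝ) (ha : 0 < a) (hb : 0 < b) (ht : 0 ≤ t)
    (m k : ℕ) (hm : 0 < m) :
    (∑' n : ℕ, t ^ n / (n.factorial : ℝ) * carlemanPow a b n m (m + k))
      = (Nat.choose (k + m - 1) k : ℝ) * (b / a) ^ k * Real.exp (m * t * a) *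
          (Real.exp (t * a) - 1) ^ k := by
  have ha' : a ≠ 0 := ha.ne'
  have hP := carlemanPow_eq a b ha' m hm
  have hexp : ∀ x : ℝ, ∑' n : ℕ, x^n/(n.factorial:ℝ) = Real.exp x := by
    intro x
    rw [Real.exp_eq_exp_ℝ, NormedSpace.exp_eq_tsum_div]
  set A : ℝ := (Nat.choose (k + m - 1) k : ℝ) * (b / a) ^ k with hA
  have hfun : ∀ n : ℕ, t ^ n / (n.factorial : ℝ) * carlemanPow a b n m (m + k)
      = ∑ r ∈ Finset.range (k+1),
          (A * ((-1:ℝ)^(k-r) * (Nat.choose k r : ℝ))) *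
            ((((m:ℝ)+r)*a*t)^n / (n.factorial : ℝ)) := by
    intro n
    rw [hP n k]
    unfold Sent
    rw [Finset.mul_sum, Finset.mul_sum]
    apply Finset.sum_congr rfl
    intro r hr
    simp only [mul_pow]
    ring
  rw [tsum_congr hfun, Summable.tsum_finsetSum (by
    intro r hr
    exact (Real.summable_pow_div_factorial _).mul_left _)]
  have hterm : ∀ r ∈ Finset.range (k+1),
      (∑' n : ℕ, (A * ((-1:ℝ)^(k-r) * (Nat.choose k r : ℝ))) *
        ((((m:ℝ)+r)*a*t)^n / (n.factorial : ℝ)))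
      = (A * ((-1:ℝ)^(k-r) * (Nat.choose k r : ℝ))) * Real.exp (((m:ℝ)+r)*a*t) := by
    intro r hr
    rw [tsum_mul_left, hexp]
  rw [Finset.sum_congr rfl hterm]
  have hsub : (Real.exp (t*a) - 1)^k
      = ∑ r ∈ Finset.range (k+1), (-1:ℝ)^(k-r) * (Nat.choose k r : ℝ)
          * Real.exp ((r:ℝ)*(t*a)) := by
    rw [sub_pow]
    apply Finset.sum_congr rfl
    intro r hr
    have hr' : r ≤ k := by have := Finset.mem_range.mp hr; omega
    have hpar : (-1:ℝ)^(r+k) = (-1:ℝ)^(k-r) := by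
      rw [show r+k = (k-r)+2*r by omega, pow_add, pow_mul]; simp
    rw [one_pow, hpar, ← Real.exp_nat_mul]
    ring
  rw [hsub, Finset.mul_sum]
  apply Finset.sum_congr rfl
  intro r hr
  rw [show ((m:ℝ)+r)*a*t = (m:ℝ)*t*a + (r:ℝ)*(t*a) by ring, Real.exp_add]
  ring
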